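/- arXiv:2204.04663 — 3 statements merged into one kernel-verified Lean document; each statement's English description precedes it below -/
import Mathlib

section
/- For every p ∈ (0,1) and every integer N ≥ 1, ∫_0^1 x^N dμ_p(x) = ((1−p)^N / ∏_{n=1}^N (2^n − 1)) · det A_N(p). -/
open MeasureTheory

/-- The probability measure on `{0,1}` (encoded as `Bool`, `false` ↔ digit `0`,
`true` ↔ digit `1`) giving mass `p` to the digit `0` and mass `1 - p` to the digit `1`. -/
noncomputable def bernoulliBool (p : ℝ) : Measure Bool :=
  ENNReal.ofReal p • Measure.dirac false + ENNReal.ofReal (1 - p) • Measure.dirac true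

/-- `ν` is the infinite product, over `n ≥ 1` (indexed here by `ℕ`, where index `n`
stands for the digit `n+1`), of the Bernoulli measures `bernoulliBool p`:
it is characterized as the projective limit of the finite product measures. -/
def IsBernoulliProduct (p : ℝ) (ν : Measure (ℕ → Bool)) : Prop :=
  IsProjectiveLimit ν fun J : Finset ℕ => Measure.pi fun _ : J => bernoulliBool p

/-- The binary expansion map sending a 0-1 sequence `(x_n)_{n ≥ 1}` to
`∑_{n=1}^∞ x_n 2^{-n}` (index `n : ℕ` stands for the digit `n+1`). -/
noncomputable def binExpand (x : ℕ → Bool) : ℝ :=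
  ∑' n : ℕ, if x n then ((2 : ℝ) ^ (n + 1))⁻¹ else 0

/-- `μ` is the Bernoulli measure `μ_p` on `ℝ`: the pushforward under the binary
expansion map of the infinite product of Bernoulli measures on `{0,1}`. -/
def IsBernoulliMeasure (p : ℝ) (μ : Measure ℝ) : Prop :=
  ∃ ν : Measure (ℕ → Bool), IsBernoulliProduct p ν ∧ μ = ν.map binExpand

/-- The `N × N` real Hessenberg matrix `A_N(p)` (1-indexed in the paper, 0-indexed here):
row `i` (paper row `i+1`) has entries `C(i+1, j)` for `j ≤ i`, the entry
`(1 - 2^{i+1})/(1-p)` at column `j = i+1`, and `0` for `j > i+1`. -/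
noncomputable def Amat (N : ℕ) (p : ℝ) : Matrix (Fin N) (Fin N) ℝ := fun i j =>
  if (j : ℕ) ≤ (i : ℕ) then (Nat.choose ((i : ℕ) + 1) (j : ℕ) : ℝ)
  else if (j : ℕ) = (i : ℕ) + 1 then (1 - 2 ^ ((i : ℕ) + 1)) / (1 - p)
  else 0

open Finset Filter Topology Matrix

/-!
Splitting off the first binary digit shows that the moments `L m = ∫ x ^ m ∂μ_p` satisfy
`2 ^ m * L m = p * L m + (1 - p) * ∑_{j ≤ m} C(m, j) * L j`, that is
`(2 ^ m - 1) * L m = (1 - p) * ∑_{j < m} C(m, j) * L j`. We get this as the limit, as `k → ∞`,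
of the same identity for the `k`-digit truncations, whose moments are finite sums.
The recurrence says precisely that `A_N(p)` maps `(L 0, …, L (N-1))` to `c • e_N` with
`c = (2 ^ N - 1) / (1 - p) * L N`. Since `L 0 = 1`, Cramer's rule gives
`det A_N(p) = c * det (A_N(p) with first column e_N)`, and the last determinant is,
up to the sign `(-1) ^ (N-1)`, the product of the superdiagonal entries `(1 - 2 ^ i) / (1 - p)`.
-/

noncomputable def binDigit (b : Bool) (n : ℕ) : ℝ := if b then ((2 : ℝ) ^ (n + 1))⁻¹ else 0

theorem binDigit_nonneg (b : Bool) (n : ℕ) : 0 ≤ binDigit b n := by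
  unfold binDigit; split_ifs <;> positivity

theorem binDigit_le (b : Bool) (n : ℕ) : binDigit b n ≤ 1 / 2 / 2 ^ n := by
  unfold binDigit
  split_ifs
  · exact (by ring : ((2 : ℝ) ^ (n + 1))⁻¹ = 1 / 2 / 2 ^ n).le
  · positivity

theorem summable_binDigit (x : ℕ → Bool) : Summable fun n => binDigit (x n) n :=
  .of_nonneg_of_le (fun n => binDigit_nonneg _ n) (fun n => binDigit_le _ n)
    (summable_geometric_two' 1)

noncomputable def finBinExpand {k : ℕ} (y : Fin k → Bool) : ℝ := ∑ i, binDigit (y i) i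

theorem finBinExpand_cons {k : ℕ} (b : Bool) (z : Fin k → Bool) :
    finBinExpand (Fin.cons b z : Fin (k + 1) → Bool) = binDigit b 0 + finBinExpand z / 2 := by
  rw [finBinExpand, Fin.sum_univ_succ, finBinExpand, sum_div]
  congr 1
  refine sum_congr rfl fun i _ => ?_
  rw [Fin.cons_succ, Fin.val_succ, binDigit, binDigit]
  split_ifs <;> ring

theorem finBinExpand_nonneg {k : ℕ} (y : Fin k → Bool) : 0 ≤ finBinExpand y :=
  sum_nonneg fun i _ => binDigit_nonneg _ i

theorem finBinExpand_eq_sum_range (x : ℕ → Bool) (k : ℕ) :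
    finBinExpand (fun i : Fin k => x i) = ∑ n ∈ range k, binDigit (x n) n :=
  Fin.sum_univ_eq_sum_range (fun n => binDigit (x n) n) k

theorem tendsto_finBinExpand (x : ℕ → Bool) :
    Tendsto (fun k => finBinExpand fun i : Fin k => x i) atTop (𝓝 (binExpand x)) := by
  simp only [finBinExpand_eq_sum_range]
  exact (summable_binDigit x).hasSum.tendsto_sum_nat

theorem finBinExpand_le_binExpand (x : ℕ → Bool) (k : ℕ) :
    finBinExpand (fun i : Fin k => x i) ≤ binExpand x := by
  rw [finBinExpand_eq_sum_range]
  exact (summable_binDigit x).sum_le_tsum _ fun n _ => binDigit_nonneg _ n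

theorem binExpand_mem_Icc (x : ℕ → Bool) : binExpand x ∈ Set.Icc 0 1 := by
  refine ⟨(finBinExpand_nonneg _).trans (finBinExpand_le_binExpand x 0), ?_⟩
  calc binExpand x ≤ ∑' n : ℕ, (1 : ℝ) / 2 / 2 ^ n :=
        (summable_binDigit x).tsum_le_tsum (fun n => binDigit_le _ n) (summable_geometric_two' 1)
    _ = 1 := tsum_geometric_two' 1

theorem measurable_finBinExpand_restrict (k : ℕ) :
    Measurable fun x : ℕ → Bool => finBinExpand fun i : Fin k => x i :=
  (measurable_of_countable finBinExpand).comp (by fun_prop)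

theorem measurable_binExpand : Measurable binExpand :=
  measurable_of_tendsto_metrizable measurable_finBinExpand_restrict
    (tendsto_pi_nhds.2 tendsto_finBinExpand)

theorem Fintype.sum_fin_succ_pi {α M : Type*} [Fintype α] [AddCommMonoid M] {k : ℕ}
    (f : (Fin (k + 1) → α) → M) :
    ∑ y, f y = ∑ a, ∑ z : Fin k → α, f (Fin.cons a z) := by
  rw [← (Fin.consEquiv fun _ => α).sum_comp, Fintype.sum_prod_type]
  rfl

noncomputable def digitWeight (p : ℝ) (b : Bool) : ℝ := if b then 1 - p else p

noncomputable def truncMoment (p : ℝ) (k j : ℕ) : ℝ :=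
  ∑ y : Fin k → Bool, (∏ i, digitWeight p (y i)) * finBinExpand y ^ j

theorem sum_choose_mul_pow (c x : ℝ) (N : ℕ) :
    ∑ j ∈ range (N + 1), (N.choose j : ℝ) * (c * x ^ j) = c * (x + 1) ^ N := by
  rw [add_pow, mul_sum]
  exact sum_congr rfl fun j _ => by ring

theorem truncMoment_succ (p : ℝ) (k N : ℕ) :
    truncMoment p (k + 1) N = 2⁻¹ ^ N * (p * truncMoment p k N +
      (1 - p) * ∑ j ∈ range (N + 1), (N.choose j : ℝ) * truncMoment p k j) := by
  have hsplit : ∀ z : Fin k → Bool, ∀ P : ℝ,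
      digitWeight p true * P * (binDigit true 0 + finBinExpand z / 2) ^ N +
        digitWeight p false * P * (binDigit false 0 + finBinExpand z / 2) ^ N =
      2⁻¹ ^ N * (p * (P * finBinExpand z ^ N) +
        (1 - p) * ∑ j ∈ range (N + 1), (N.choose j : ℝ) * (P * finBinExpand z ^ j)) := by
    intro z P
    simp only [digitWeight, binDigit, if_true, Bool.false_eq_true, if_false]
    rw [sum_choose_mul_pow, show ((2 : ℝ) ^ (0 + 1))⁻¹ + finBinExpand z / 2 =
      2⁻¹ * (finBinExpand z + 1) by ring, mul_pow]
    ring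
  simp only [truncMoment, Fintype.sum_fin_succ_pi, Fintype.sum_bool, Fin.prod_univ_succ,
    Fin.cons_zero, Fin.cons_succ, finBinExpand_cons]
  rw [← sum_add_distrib, sum_congr rfl fun z _ => hsplit z _, ← mul_sum, sum_add_distrib,
    ← mul_sum, ← mul_sum, sum_comm]
  simp only [mul_sum]

instance (p : ℝ) : IsFiniteMeasure (bernoulliBool p) :=
  ⟨by simp [bernoulliBool]⟩

theorem bernoulliBool_real_singleton {p : ℝ} (hp0 : 0 ≤ p) (hp1 : p ≤ 1) (b : Bool) :
    (bernoulliBool p).real {b} = digitWeight p b := by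
  cases b <;> simp [bernoulliBool, measureReal_def, digitWeight, hp0, hp1]

namespace IsBernoulliProduct

variable {p : ℝ} {ν : Measure (ℕ → Bool)}

theorem isProbabilityMeasure (hν : IsBernoulliProduct p ν) : IsProbabilityMeasure ν :=
  ⟨by rw [hν.measure_univ_eq ∅]; simp⟩

theorem map_restrict_fin (hν : IsBernoulliProduct p ν) (k : ℕ) :
    ν.map (fun x (i : Fin k) => x i) = Measure.pi fun _ => bernoulliBool p := by
  let e : range k ≃ Fin k :=
    ⟨fun j => ⟨j, mem_range.1 j.2⟩, fun i => ⟨i, mem_range.2 i.2⟩, fun _ => rfl,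
      fun _ => rfl⟩
  have hcomp : (fun (x : ℕ → Bool) (i : Fin k) => x i) =
      MeasurableEquiv.piCongrLeft (fun _ => Bool) e ∘ (range k).restrict := by
    ext x i
    obtain ⟨j, rfl⟩ := e.surjective i
    exact (MeasurableEquiv.piCongrLeft_apply_apply (β := fun _ => Bool) e
      ((range k).restrict x) j).symm
  rw [hcomp]
  exact ((measurePreserving_piCongrLeft _ e).comp ⟨by fun_prop, hν _⟩).map_eq

theorem integral_finBinExpand_pow (hν : IsBernoulliProduct p ν) (hp0 : 0 ≤ p) (hp1 : p ≤ 1)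
    (k j : ℕ) : ∫ x, finBinExpand (fun i : Fin k => x i) ^ j ∂ν = truncMoment p k j := by
  rw [← integral_map (φ := fun (x : ℕ → Bool) (i : Fin k) => x i)
      (f := fun y => finBinExpand y ^ j) (by fun_prop : Measurable _).aemeasurable
      (measurable_of_countable _).aestronglyMeasurable,
    hν.map_restrict_fin, integral_fintype .of_finite]
  refine sum_congr rfl fun y _ => ?_
  rw [measureReal_def, ← Set.univ_pi_singleton, Measure.pi_pi, ENNReal.toReal_prod, smul_eq_mul]
  simp only [← measureReal_def, bernoulliBool_real_singleton hp0 hp1]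

theorem tendsto_truncMoment (hν : IsBernoulliProduct p ν) (hp0 : 0 ≤ p) (hp1 : p ≤ 1)
    (j : ℕ) :
    Tendsto (fun k => truncMoment p k j) atTop (𝓝 (∫ x, binExpand x ^ j ∂ν)) := by
  have := hν.isProbabilityMeasure
  simp only [← hν.integral_finBinExpand_pow hp0 hp1]
  refine tendsto_integral_of_dominated_convergence (fun _ => 1)
    (fun k => ((measurable_finBinExpand_restrict k).pow_const j).aestronglyMeasurable)
    (integrable_const 1) (fun k => ae_of_all _ fun x => ?_)
    (ae_of_all _ fun x => (tendsto_finBinExpand x).pow j)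
  have h0 := finBinExpand_nonneg fun i : Fin k => x i
  rw [Real.norm_eq_abs, abs_of_nonneg (pow_nonneg h0 j)]
  exact pow_le_one₀ h0 ((finBinExpand_le_binExpand x k).trans (binExpand_mem_Icc x).2)

theorem moment_recurrence (hν : IsBernoulliProduct p ν) (hp0 : 0 ≤ p) (hp1 : p ≤ 1)
    (m : ℕ) : (2 ^ (m + 1) - 1) * ∫ x, binExpand x ^ (m + 1) ∂ν =
      (1 - p) * ∑ j ∈ range (m + 1), ((m + 1).choose j : ℝ) *
        ∫ x, binExpand x ^ j ∂ν := by
  have hlim := hν.tendsto_truncMoment hp0 hp1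
  have hfix := tendsto_nhds_unique ((hlim (m + 1)).comp (tendsto_add_atTop_nat 1)) <| by
    simp only [Function.comp_def, truncMoment_succ]
    exact (((hlim _).const_mul p).add
      ((tendsto_finsetSum _ fun j _ => (hlim j).const_mul _).const_mul _)).const_mul _
  rw [sum_range_succ, Nat.choose_self, Nat.cast_one, one_mul, inv_pow] at hfix
  field_simp at hfix
  linear_combination hfix

end IsBernoulliProduct

theorem setIntegral_Icc_map_binExpand (ν : Measure (ℕ → Bool)) {f : ℝ → ℝ}
    (hf : AEStronglyMeasurable f (ν.map binExpand)) :
    ∫ x in Set.Icc 0 1, f x ∂(ν.map binExpand) = ∫ x, f (binExpand x) ∂ν := by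
  rw [setIntegral_map measurableSet_Icc hf measurable_binExpand.aemeasurable,
    Set.preimage_eq_univ_iff.2 fun _ ⟨x, hx⟩ => hx ▸ binExpand_mem_Icc x,
    Measure.restrict_univ]

namespace Matrix

variable {R : Type*} [CommRing R]

theorem det_smul_eq_cramer_mulVec {ι : Type*} [Fintype ι] [DecidableEq ι] (A : Matrix ι ι R)
    (v : ι → R) : A.det • v = A.cramer (A *ᵥ v) := by
  rw [cramer_eq_adjugate_mulVec, mulVec_mulVec, adjugate_mul, smul_mulVec, one_mulVec]

theorem det_updateCol_zero_single_last {n : ℕ} (A : Matrix (Fin (n + 1)) (Fin (n + 1)) R)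
    (hA : ∀ i j : Fin (n + 1), (i : ℕ) + 1 < j → A i j = 0) (c : R) :
    (A.updateCol 0 (Pi.single (Fin.last n) c)).det = c * ∏ i : Fin n, -A i.castSucc i.succ := by
  rw [det_succ_column_zero, Fintype.sum_eq_single (Fin.last n) fun i hi => by
    rw [updateCol_self, Pi.single_eq_of_ne hi, mul_zero, zero_mul],
    updateCol_self, Pi.single_eq_same, Fin.val_last]
  have hlower : ((A.updateCol 0 (Pi.single (Fin.last n) c)).submatrix
      (Fin.last n).succAbove Fin.succ).IsLowerTriangular := by
    intro i j hij
    rw [submatrix_apply, updateCol_ne (Fin.succ_ne_zero j)]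
    have hij : (i : ℕ) < j := hij
    exact hA _ _ (by simp only [Fin.succAbove_last, Fin.val_castSucc, Fin.val_succ]; omega)
  rw [det_of_isLowerTriangular _ hlower, prod_neg, card_univ, Fintype.card_fin]
  simp only [submatrix_apply, Fin.succAbove_last, updateCol_ne (Fin.succ_ne_zero _)]
  ring

end Matrix

theorem Amat_mulVec {p : ℝ} (hp : p ≠ 1) {L : ℕ → ℝ}
    (hL : ∀ m, (2 ^ (m + 1) - 1) * L (m + 1) =
      (1 - p) * ∑ j ∈ range (m + 1), ((m + 1).choose j : ℝ) * L j) (n : ℕ) :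
    Amat (n + 1) p *ᵥ (fun i => L i) =
      Pi.single (Fin.last n) ((2 ^ (n + 1) - 1) / (1 - p) * L (n + 1)) := by
  ext ⟨i, hi⟩
  have hrow : (Amat (n + 1) p *ᵥ fun i => L i) ⟨i, hi⟩ =
      ∑ m ∈ range (i + 1), ((i + 1).choose m : ℝ) * L m +
        ∑ m ∈ Ico (i + 1) (n + 1),
          if m = i + 1 then (1 - 2 ^ (i + 1)) / (1 - p) * L m else 0 := by
    simp only [mulVec, dotProduct, Amat]
    rw [Fin.sum_univ_eq_sum_range (fun m => (if m ≤ i then ((i + 1).choose m : ℝ)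
        else if m = i + 1 then (1 - 2 ^ (i + 1)) / (1 - p) else 0) * L m) (n + 1),
      ← sum_range_add_sum_Ico _ hi]
    congr 1
    · exact sum_congr rfl fun m hm => by rw [if_pos (Nat.lt_succ_iff.1 (mem_range.1 hm))]
    · refine sum_congr rfl fun m hm => ?_
      rw [if_neg (by simp only [mem_Ico] at hm; omega)]
      split_ifs <;> simp
  have hlow : ∑ m ∈ range (i + 1), ((i + 1).choose m : ℝ) * L m =
      (2 ^ (i + 1) - 1) / (1 - p) * L (i + 1) := by
    rw [div_mul_eq_mul_div, eq_div_iff (sub_ne_zero.2 hp.symm), hL, mul_comm]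
  rw [hrow, hlow, sum_ite_eq']
  rcases (Nat.lt_succ_iff.1 hi).lt_or_eq with hin | rfl
  · rw [if_pos (by simp only [mem_Ico]; omega), Pi.single_eq_of_ne (by simp [Fin.ext_iff]; omega)]
    ring
  · simp [Fin.last]

theorem Amat_det {p : ℝ} (hp : p ≠ 1) {L : ℕ → ℝ} (hL0 : L 0 = 1)
    (hL : ∀ m, (2 ^ (m + 1) - 1) * L (m + 1) =
      (1 - p) * ∑ j ∈ range (m + 1), ((m + 1).choose j : ℝ) * L j) (N : ℕ) :
    (Amat N p).det = (∏ n ∈ range N, ((2 : ℝ) ^ (n + 1) - 1)) / (1 - p) ^ N * L N := by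
  cases N with
  | zero => simp [hL0]
  | succ n =>
    have hhess : ∀ i j : Fin (n + 1), (i : ℕ) + 1 < j → Amat (n + 1) p i j = 0 :=
      fun i j hij => by simp only [Amat]; rw [if_neg (by omega), if_neg (by omega)]
    have hsuper : ∀ i : Fin n,
        -Amat (n + 1) p i.castSucc i.succ = (2 ^ ((i : ℕ) + 1) - 1) / (1 - p) := fun i => by
      simp only [Amat, Fin.val_castSucc, Fin.val_succ]
      rw [if_neg (by omega), if_pos trivial]
      ring
    have hcramer := congrFun (det_smul_eq_cramer_mulVec (Amat (n + 1) p) (fun i => L i)) 0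
    rw [Pi.smul_apply, smul_eq_mul, Fin.val_zero, hL0, mul_one, Amat_mulVec hp hL, cramer_apply,
      det_updateCol_zero_single_last _ hhess] at hcramer
    rw [hcramer, Fintype.prod_congr _ _ hsuper,
      Fin.prod_univ_eq_prod_range (fun i => ((2 : ℝ) ^ (i + 1) - 1) / (1 - p)), prod_div_distrib,
      prod_const, card_range, prod_range_succ]
    field_simp
    ring

theorem stmt4_general (p : ℝ) (hp : p ∈ Set.Ioo (0 : ℝ) 1) (μ : Measure ℝ)
    (hμ : IsBernoulliMeasure p μ) (N : ℕ) :
    ∫ x in Set.Icc (0 : ℝ) 1, x ^ N ∂μ =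
      (1 - p) ^ N / (∏ n ∈ Finset.range N, ((2 : ℝ) ^ (n + 1) - 1)) * (Amat N p).det := by
  obtain ⟨ν, hν, rfl⟩ := hμ
  have := hν.isProbabilityMeasure
  have hprod : 0 < ∏ n ∈ Finset.range N, ((2 : ℝ) ^ (n + 1) - 1) :=
    prod_pos fun n _ => sub_pos.2 (one_lt_pow₀ one_lt_two n.succ_ne_zero)
  have h1p : (1 - p) ^ N ≠ 0 := pow_ne_zero _ (sub_ne_zero.2 hp.2.ne')
  rw [setIntegral_Icc_map_binExpand ν (by fun_prop),
    Amat_det hp.2.ne (L := fun j => ∫ x, binExpand x ^ j ∂ν) (by simp)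
      (hν.moment_recurrence hp.1.le hp.2.le)]
  field_simp

/-- For `p ∈ (0,1)` and `N ≥ 1`,
`∫_0^1 x^N dμ_p(x) = ((1-p)^N / ∏_{n=1}^N (2^n - 1)) * det A_N(p)`. -/
theorem stmt4 (p : ℝ) (hp : p ∈ Set.Ioo (0 : ℝ) 1) (μ : Measure ℝ)
    (hμ : IsBernoulliMeasure p μ) (N : ℕ) (hN : 1 ≤ N) :
    ∫ x in Set.Icc (0 : ℝ) 1, x ^ N ∂μ =
      (1 - p) ^ N / (∏ n ∈ Finset.range N, ((2 : ℝ) ^ (n + 1) - 1)) * (Amat N p).det :=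
  stmt4_general p hp μ hμ N
end

section
/- For every integer n ≥ 1, the polynomial Q_n has degree n, and all of its complex roots are simple and are real numbers lying in the interval [0,1]. -/
open Polynomial

/-- The sequence of real polynomials defined by `Q_1(p) = 1 - p` and
`Q_{n+1}(p) = p (p - 1) Q_n'(p)` for `n ≥ 1` (the value at `0` is irrelevant). -/
noncomputable def Q : ℕ → Polynomial ℝ
  | 0 => 0
  | 1 => 1 - Polynomial.X
  | n + 2 => Polynomial.X * (Polynomial.X - 1) * (Q (n + 1)).derivative

lemma Q_one : Q 1 = Polynomial.C (-1) * (Polynomial.X - Polynomial.C 1) := by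
  show (1 - Polynomial.X : Polynomial ℝ) = _
  ring_nf
  simp [Polynomial.C_1]
  ring

lemma key (n : ℕ) (hn : 1 ≤ n) :
    (Q n).degree = (n : WithBot ℕ) ∧ (Q n).roots.Nodup ∧
      Multiset.card (Q n).roots = n ∧ ∀ x ∈ (Q n).roots, x ∈ Set.Icc (0:ℝ) 1 := by
  induction n, hn using Nat.le_induction with
  | base =>
    rw [Q_one]
    constructor
    · rw [degree_C_mul (by norm_num), degree_X_sub_C]; rfl
    rw [roots_C_mul _ (by norm_num), roots_X_sub_C]
    refine ⟨Multiset.nodup_singleton 1, by simp, ?_⟩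
    intro x hx
    simp at hx
    simp [hx]
  | succ n hn ih =>
    obtain ⟨hdeg, hnd, hcard, hmem⟩ := ih
    have hQ : Q (n+1) = X * (X - 1) * (Q n).derivative := by
      obtain ⟨k, rfl⟩ := Nat.exists_eq_add_of_le hn
      have e1 : 1 + k + 1 = k + 2 := by omega
      have e2 : 1 + k = k + 1 := by omega
      rw [e1, e2]
      rfl
    set p := Q n with hp
    have hp0 : p ≠ 0 := by
      intro h; rw [h, degree_zero] at hdeg; exact absurd hdeg.symm (by simp)
    have hnat : p.natDegree = n := natDegree_eq_of_degree_eq_some hdeg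
    have hd0 : derivative p ≠ 0 := by
      intro h
      have hc := eq_C_of_derivative_eq_zero h
      rw [hc, natDegree_C] at hnat
      omega
    -- Rolle with location
    set t := (derivative p).roots.toFinset.filter (fun z => 0 < z ∧ z < 1) with ht
    have hinter : p.roots.toFinset.card ≤ (t \ p.roots.toFinset).card + 1 := by
      refine Finset.card_le_diff_of_interleaved fun x hx y hy hxy _ => ?_
      rw [Multiset.mem_toFinset] at hx hy
      have hx' := (mem_roots hp0).1 hx
      have hy' := (mem_roots hp0).1 hy
      obtain ⟨z, hz1, hz2⟩ := exists_deriv_eq_zero hxy p.continuousOn (hx'.trans hy'.symm)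
      refine ⟨z, ?_, hz1.1, hz1.2⟩
      rw [ht, Finset.mem_filter, Multiset.mem_toFinset, mem_roots hd0]
      have h0x : (0:ℝ) ≤ x := (hmem x hx).1
      have hy1 : y ≤ 1 := (hmem y hy).2
      refine ⟨?_, lt_of_le_of_lt h0x hz1.1, lt_of_lt_of_le hz1.2 hy1⟩
      rwa [IsRoot, ← p.deriv]
    have hsf : p.roots.toFinset.card = n := by
      rw [Multiset.toFinset_card_eq_card_iff_nodup.2 hnd, hcard]
    have hub : Multiset.card (derivative p).roots ≤ n - 1 := by
      refine (card_roots' _).trans ?_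
      have := natDegree_derivative_le p
      omega
    have h2 : (t \ p.roots.toFinset).card ≤ t.card :=
      Finset.card_le_card (Finset.sdiff_subset)
    have h3 : t.card ≤ (derivative p).roots.toFinset.card :=
      Finset.card_le_card (Finset.filter_subset _ _)
    have h4 : (derivative p).roots.toFinset.card ≤ Multiset.card (derivative p).roots :=
      Multiset.toFinset_card_le _
    have hdcard : Multiset.card (derivative p).roots = n - 1 := by omega
    have hdfin : (derivative p).roots.toFinset.card = n - 1 := by omega
    have hdnodup : (derivative p).roots.Nodup := by
      have hle : (derivative p).roots.dedup ≤ (derivative p).roots := Multiset.dedup_le _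
      have hcd : Multiset.card (derivative p).roots ≤ Multiset.card (derivative p).roots.dedup := by
        have : Multiset.card (derivative p).roots.dedup = n - 1 := hdfin
        omega
      have := Multiset.eq_of_le_of_card_le hle hcd
      rw [← this]
      exact Multiset.nodup_dedup _
    have htall : t = (derivative p).roots.toFinset :=
      Finset.eq_of_subset_of_card_le (Finset.filter_subset _ _) (by omega)
    have hdm : ∀ x ∈ (derivative p).roots, 0 < x ∧ x < 1 := by
      intro x hx
      have hxt : x ∈ t := by rw [htall]; exact Multiset.mem_toFinset.2 hx
      exact (Finset.mem_filter.1 hxt).2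
    have hddeg : (derivative p).natDegree = n - 1 := by
      have hlb := card_roots' (derivative p)
      have := natDegree_derivative_le p
      omega
    have hX1 : (X - 1 : Polynomial ℝ) = X - C 1 := by rw [C_1]
    have h1ne : (X - 1 : Polynomial ℝ) ≠ 0 := by rw [hX1]; exact X_sub_C_ne_zero 1
    have hne2 : (X * (X - 1) : Polynomial ℝ) ≠ 0 := mul_ne_zero X_ne_zero h1ne
    have hroots : (Q (n+1)).roots = 0 ::ₘ 1 ::ₘ (derivative p).roots := by
      rw [hQ, roots_mul (mul_ne_zero hne2 hd0), roots_mul hne2, roots_X, hX1, roots_X_sub_C,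
        Multiset.singleton_add, Multiset.cons_add, Multiset.singleton_add]
    refine ⟨?_, ?_, ?_, ?_⟩
    · rw [hQ, degree_mul, degree_mul, degree_X, hX1, degree_X_sub_C,
        degree_eq_natDegree hd0, hddeg]
      rw [show (1 : WithBot ℕ) = ((1:ℕ) : WithBot ℕ) from rfl, ← Nat.cast_add, ← Nat.cast_add]
      congr 1
      omega
    · rw [hroots]
      refine Multiset.nodup_cons.2 ⟨?_, Multiset.nodup_cons.2 ⟨?_, hdnodup⟩⟩
      · simp only [Multiset.mem_cons]
        push_neg
        exact ⟨by norm_num, fun h => by have := (hdm 0 h).1; linarith⟩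
      · exact fun h => by have := (hdm 1 h).2; linarith
    · rw [hroots]; simp [hdcard]; omega
    · intro x hx
      rw [hroots] at hx
      rcases Multiset.mem_cons.1 hx with rfl | hx
      · exact ⟨le_refl 0, by norm_num⟩
      rcases Multiset.mem_cons.1 hx with rfl | hx
      · exact ⟨by norm_num, le_refl 1⟩
      · exact ⟨(hdm x hx).1.le, (hdm x hx).2.le⟩

/-- For every `n ≥ 1`, the polynomial `Q_n` has degree `n`, and all of its
complex roots are simple and are real numbers lying in `[0,1]`. -/
theorem stmt5 (n : ℕ) (hn : 1 ≤ n) :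
    (Q n).degree = (n : WithBot ℕ) ∧
      ∀ z : ℂ, ((Q n).map (algebraMap ℝ ℂ)).IsRoot z →
        ((Q n).map (algebraMap ℝ ℂ)).rootMultiplicity z = 1 ∧
          z.im = 0 ∧ z.re ∈ Set.Icc (0 : ℝ) 1 := by
  obtain ⟨hdeg, hnd, hcard, hmem⟩ := key n hn
  have hp0 : Q n ≠ 0 := by
    intro h; rw [h, degree_zero] at hdeg; exact absurd hdeg.symm (by simp)
  have hnat : (Q n).natDegree = n := natDegree_eq_of_degree_eq_some hdeg
  have hinj : Function.Injective (algebraMap ℝ ℂ) := (algebraMap ℝ ℂ).injective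
  have hmap0 : (Q n).map (algebraMap ℝ ℂ) ≠ 0 := (Polynomial.map_ne_zero_iff hinj).2 hp0
  have hrm : ((Q n).map (algebraMap ℝ ℂ)).roots = (Q n).roots.map (algebraMap ℝ ℂ) :=
    (roots_map_of_injective_of_card_eq_natDegree hinj (by rw [hcard, hnat])).symm
  refine ⟨hdeg, fun z hz => ?_⟩
  have hz' : z ∈ ((Q n).map (algebraMap ℝ ℂ)).roots := (mem_roots hmap0).2 hz
  rw [hrm] at hz'
  obtain ⟨r, hr, rfl⟩ := Multiset.mem_map.1 hz'
  have hr01 := hmem r hr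
  refine ⟨?_, ?_, ?_⟩
  · rw [← count_roots, hrm, Multiset.count_map_eq_count' _ _ hinj]
    exact Multiset.count_eq_one_of_mem hnd hr
  · simp [Complex.ofReal_im]
  · simpa using hr01
end

section
/- For every p ∈ (0,1) and every ω ∈ ℂ with |ω|² < (ln(p/(1−p)))² + π², the series ∑_{n=1}^∞ Q_n(p) ω^n / n! converges absolutely and exp(∑_{n=1}^∞ Q_n(p) ω^n / n!) = p + (1−p) e^ω. -/
open Complex Metric Polynomial
open scoped Nat

namespace Polynomial

variable {R : Type*} [CommSemiring R]

noncomputable def odeIteratedDeriv (P : R[X]) (n : ℕ) : R[X] :=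
  (fun q => P * derivative q)^[n] X

theorem odeIteratedDeriv_zero (P : R[X]) : P.odeIteratedDeriv 0 = X := rfl

theorem odeIteratedDeriv_succ (P : R[X]) (n : ℕ) :
    P.odeIteratedDeriv (n + 1) = P * derivative (P.odeIteratedDeriv n) :=
  Function.iterate_succ_apply' _ n X

end Polynomial

theorem iteratedDeriv_eq_aeval_odeIteratedDeriv {𝕜 R : Type*} [NontriviallyNormedField 𝕜]
    [CommSemiring R] [Algebra R 𝕜] {P : R[X]} {f : 𝕜 → 𝕜} {U : Set 𝕜} (hU : IsOpen U)
    (hf : ∀ z ∈ U, HasDerivAt f (aeval (f z) P) z) (n : ℕ) :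
    ∀ z ∈ U, iteratedDeriv n f z = aeval (f z) (P.odeIteratedDeriv n) := by
  induction n with
  | zero => simp [odeIteratedDeriv_zero]
  | succ n ih =>
    intro z hz
    have hderiv : HasDerivAt (fun w => aeval (f w) (P.odeIteratedDeriv n))
        (aeval (f z) (P.odeIteratedDeriv (n + 1))) z := by
      rw [odeIteratedDeriv_succ, map_mul, mul_comm]
      exact ((P.odeIteratedDeriv n).hasDerivAt_aeval (f z)).comp z (hf z hz)
    rw [iteratedDeriv_succ, (Filter.eventuallyEq_of_mem (hU.mem_nhds hz) ih).deriv_eq,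
      hderiv.deriv]

theorem Q_succ_eq_comp (n : ℕ) :
    Q (n + 1) = ((X - X ^ 2 : ℝ[X]).odeIteratedDeriv n).comp (1 - X) := by
  induction n with
  | zero => simp [Q, odeIteratedDeriv_zero]
  | succ n ih =>
    rw [odeIteratedDeriv_succ, mul_comp, Q, ih, derivative_comp_one_sub_X]
    simp only [sub_comp, pow_comp, X_comp]
    ring

theorem Complex.norm_log_le_of_exp_eq {z c : ℂ} (h : exp z = c) : ‖log c‖ ≤ ‖z‖ := by
  obtain ⟨k, rfl⟩ : ∃ k : ℤ, z = log c + k * (2 * Real.pi * I) := by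
    rw [← exp_eq_exp_iff_exists_int, exp_log (h ▸ exp_ne_zero z), h]
  set θ := (log c).im
  have hθ : -Real.pi < θ ∧ θ ≤ Real.pi := ⟨neg_pi_lt_log_im c, log_im_le_pi c⟩
  -- `θ ∈ (-π, π]` forces `k` and `θ + π k` to have the same sign
  have hk : 0 ≤ (k : ℝ) * (θ + Real.pi * k) := by
    rcases lt_trichotomy k 0 with hk | rfl | hk
    · have : (k : ℝ) ≤ -1 := by exact_mod_cast Int.le_sub_one_of_lt hk
      exact mul_nonneg_of_nonpos_of_nonpos (by linarith) (by nlinarith [Real.pi_pos])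
    · simp
    · have : (1 : ℝ) ≤ k := by exact_mod_cast hk
      exact mul_nonneg (by linarith) (by nlinarith [Real.pi_pos])
  have hre : (log c + k * (2 * Real.pi * I)).re = (log c).re := by simp
  have him : (log c + k * (2 * Real.pi * I)).im = θ + 2 * Real.pi * k := by simp [θ, mul_comm]
  rw [← sq_le_sq₀ (norm_nonneg _) (norm_nonneg _), Complex.sq_norm, Complex.sq_norm, normSq_apply,
    normSq_apply, hre, him]
  nlinarith [Real.pi_pos]

theorem norm_log_neg_div_one_sub_sq {p : ℝ} (hp : p ∈ Set.Ioo (0 : ℝ) 1) :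
    ‖log (-p / (1 - p))‖ ^ 2 = Real.log (p / (1 - p)) ^ 2 + Real.pi ^ 2 := by
  have hneg : -p / (1 - p) < 0 := div_neg_of_neg_of_pos (neg_neg_of_pos hp.1) (sub_pos.2 hp.2)
  have hc : (-p / (1 - p) : ℂ) = ((-p / (1 - p) : ℝ) : ℂ) := by push_cast; ring
  rw [hc, ← normSq_eq_norm_sq, normSq_apply, log_re, log_im, arg_ofReal_of_neg hneg,
    norm_real, Real.norm_eq_abs, abs_of_neg hneg, neg_div, neg_neg]
  ring

theorem const_add_mul_exp_ne_zero {a b z : ℂ} (hz : ‖z‖ < ‖log (-a / b)‖) :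
    a + b * exp z ≠ 0 := by
  intro h
  have hb : b ≠ 0 := by
    rintro rfl
    simp only [div_zero, log_zero, norm_zero] at hz
    exact (norm_nonneg z).not_gt hz
  refine hz.not_ge (norm_log_le_of_exp_eq ?_)
  field_simp
  linear_combination h

theorem DifferentiableOn.exists_exp_eq_on_ball {h : ℂ → ℂ} {c : ℂ} {r : ℝ}
    (hh : DifferentiableOn ℂ h (ball c r)) (hr : 0 < r) (h0 : ∀ z ∈ ball c r, h z ≠ 0) :
    ∃ F : ℂ → ℂ, F c = Complex.log (h c) ∧ (∀ z ∈ ball c r, HasDerivAt F (logDeriv h z) z) ∧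
      ∀ z ∈ ball c r, cexp (F z) = h z := by
  have hlog : DifferentiableOn ℂ (logDeriv h) (ball c r) :=
    (hh.deriv isOpen_ball).div hh h0
  obtain ⟨F, hFc, hF⟩ := hlog.isExactOn_ball.with_val_at c (Complex.log (h c))
  refine ⟨F, hFc, hF, ?_⟩
  have hexpF : DifferentiableOn ℂ (cexp ∘ F) (ball c r) := fun z hz =>
    ((hF z hz).differentiableAt.cexp).differentiableWithinAt
  obtain ⟨k, -, hk⟩ := (logDeriv_eqOn_iff hexpF hh isOpen_ball (convex_ball c r).isPreconnected
    h0 (fun z _ => exp_ne_zero _)).1 fun z hz => by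
      rw [logDeriv_comp differentiableAt_exp (hF z hz).differentiableAt, logDeriv_exp,
        (hF z hz).deriv, Pi.one_apply, one_mul]
  have hk1 : k = 1 := by
    have := hk (mem_ball_self hr)
    rw [Function.comp_apply, hFc, exp_log (h0 c (mem_ball_self hr)), Pi.smul_apply,
      smul_eq_mul] at this
    exact (mul_eq_right₀ (h0 c (mem_ball_self hr))).1 this.symm
  intro z hz
  simpa [hk1] using hk hz

theorem Complex.summable_norm_taylorSeries_on_ball {E : Type*} [NormedAddCommGroup E]
    [NormedSpace ℂ E] [CompleteSpace E] {f : ℂ → E} {c z : ℂ} {r : ℝ}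
    (hf : DifferentiableOn ℂ f (ball c r)) (hz : z ∈ ball c r) :
    Summable fun n : ℕ => ‖(n ! : ℂ)⁻¹ • (z - c) ^ n • iteratedDeriv n f c‖ := by
  obtain ⟨r', hzr', hr'⟩ := exists_between (mem_ball.mp hz)
  lift r' to NNReal using dist_nonneg.trans hzr'.le
  have hP := (hf.mono (closedBall_subset_ball hr')).hasFPowerSeriesOnBall
    (dist_nonneg.trans_lt hzr')
  have hz' : z - c ∈ eball (0 : ℂ) (cauchyPowerSeries f c r').radius := by
    refine eball_subset_eball hP.r_le ?_
    rw [eball_coe, mem_ball_zero_iff, ← dist_eq_norm]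
    exact hzr'
  refine ((cauchyPowerSeries f c r').summable_norm_apply hz').congr fun n => congrArg norm ?_
  rw [iteratedDeriv_eq_iteratedFDeriv, ← hP.factorial_smul,
    FormalMultilinearSeries.apply_eq_pow_smul_coeff, ← Nat.cast_smul_eq_nsmul ℂ, smul_smul,
    smul_smul, mul_right_comm, inv_mul_cancel₀ (Nat.cast_ne_zero.mpr n.factorial_ne_zero), one_mul]
  rfl

section ConstAddMulExp

variable (a b : ℂ)

theorem logDeriv_const_add_mul_exp :
    logDeriv (fun z => a + b * cexp z) = fun z => b * cexp z / (a + b * cexp z) := by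
  funext z
  simp [logDeriv_apply]

theorem hasDerivAt_logDeriv_const_add_mul_exp {z : ℂ} (hz : a + b * cexp z ≠ 0) :
    HasDerivAt (logDeriv fun z => a + b * cexp z)
      (logDeriv (fun z => a + b * cexp z) z - logDeriv (fun z => a + b * cexp z) z ^ 2) z := by
  rw [logDeriv_const_add_mul_exp]
  have := ((hasDerivAt_exp z).const_mul b).div (((hasDerivAt_exp z).const_mul b).const_add a) hz
  refine this.congr_deriv ?_
  field_simp

end ConstAddMulExp

theorem iteratedDeriv_logDeriv_eq_Q_eval (p : ℝ) (n : ℕ) :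
    iteratedDeriv n (logDeriv fun z => (p : ℂ) + (1 - p) * cexp z) 0 = (Q (n + 1)).eval p := by
  have hU : IsOpen {z : ℂ | (p : ℂ) + (1 - p) * cexp z ≠ 0} :=
    isOpen_ne_fun (by fun_prop) continuous_const
  rw [iteratedDeriv_eq_aeval_odeIteratedDeriv hU (P := (X - X ^ 2 : ℝ[X]))
    (fun z hz => by simpa using hasDerivAt_logDeriv_const_add_mul_exp _ _ hz) n 0 (by simp),
    Q_succ_eq_comp, eval_comp, logDeriv_const_add_mul_exp]
  simpa using aeval_algebraMap_apply ℂ (1 - p) ((X - X ^ 2 : ℝ[X]).odeIteratedDeriv n)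

/-- For `p ∈ (0,1)` and `ω ∈ ℂ` with `|ω|² < (ln(p/(1-p)))² + π²`, the
series `∑_{n=1}^∞ Q_n(p) ω^n / n!` converges absolutely (index `n : ℕ` stands for
`n+1 ≥ 1`) and `exp(∑_{n=1}^∞ Q_n(p) ω^n / n!) = p + (1-p) e^ω`. -/
theorem stmt18 (p : ℝ) (hp : p ∈ Set.Ioo (0 : ℝ) 1) (ω : ℂ)
    (hω : ‖ω‖ ^ 2 < Real.log (p / (1 - p)) ^ 2 + Real.pi ^ 2) :
    Summable (fun n : ℕ =>
        ‖(((Q (n + 1)).eval p : ℝ) : ℂ) * ω ^ (n + 1) / (Nat.factorial (n + 1) : ℂ)‖) ∧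
      Complex.exp
          (∑' n : ℕ, (((Q (n + 1)).eval p : ℝ) : ℂ) * ω ^ (n + 1) / (Nat.factorial (n + 1) : ℂ)) =
        (p : ℂ) + (1 - p) * Complex.exp ω := by
  set R := ‖log (-p / (1 - p))‖
  have hωR : ω ∈ ball 0 R := by
    rw [mem_ball_zero_iff, ← sq_lt_sq₀ (norm_nonneg _) (norm_nonneg _),
      norm_log_neg_div_one_sub_sq hp]
    exact hω
  set h : ℂ → ℂ := fun z => (p : ℂ) + (1 - p) * cexp z
  obtain ⟨F, hF0, hF', hFexp⟩ := (show Differentiable ℂ h by fun_prop).differentiableOn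
    |>.exists_exp_eq_on_ball (pos_of_mem_ball hωR)
    fun z hz => const_add_mul_exp_ne_zero (mem_ball_zero_iff.mp hz)
  have hFd : DifferentiableOn ℂ F (ball 0 R) := fun z hz =>
    (hF' z hz).differentiableAt.differentiableWithinAt
  have hderiv : deriv F =ᶠ[nhds 0] logDeriv h :=
    Filter.eventually_of_mem (isOpen_ball.mem_nhds (mem_ball_self (pos_of_mem_ball hωR)))
      fun z hz => (hF' z hz).deriv
  have hterm : ∀ n : ℕ, ((n + 1)! : ℂ)⁻¹ • ω ^ (n + 1) • iteratedDeriv (n + 1) F 0 =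
      (((Q (n + 1)).eval p : ℝ) : ℂ) * ω ^ (n + 1) / ((n + 1)! : ℂ) := fun n => by
    rw [iteratedDeriv_succ', hderiv.iteratedDeriv_eq, iteratedDeriv_logDeriv_eq_Q_eval,
      smul_eq_mul, smul_eq_mul]
    ring
  have hF00 : F 0 = 0 := by simp [hF0, h]
  refine ⟨?_, ?_⟩
  · refine ((summable_nat_add_iff 1).2 (summable_norm_taylorSeries_on_ball hFd hωR)).congr
      fun n => by rw [sub_zero, hterm]
  · have := (hasSum_nat_add_iff' 1).2 (hasSum_taylorSeries_on_ball hFd hωR)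
    simp only [Finset.sum_range_one, iteratedDeriv_zero, hF00, smul_zero, sub_zero, hterm] at this
    rw [this.tsum_eq, hFexp ω hωR]
end
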